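/- arXiv:1905.05800 — 2 statements merged into one kernel-verified Lean document; each statement's English description precedes it below -/
import Mathlib

section
/- Consider the inductive type E with constructors X, Y, Zero, One, and Plus : E → E → E, with semantics eval : E → ℤ → ℤ → ℤ as above. There is no e : E such that for all x y : ℤ, eval e x y ≥ x ∧ eval e x y ≥ y ∧ (eval e x y = x ∨ eval e x y = y). -/
inductive E : Type
  | X : E
  | Y : E
  | Zero : E
  | One : E
  | Plus : E → E → E

def eval : E → ℤ → ℤ → ℤ
  | E.X, x, _ => x
  | E.Y, _, y => y
  | E.Zero, _, _ => 0
  | E.One, _, _ => 1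
  | E.Plus l r, x, y => eval l x y + eval r x y

lemma eval_linear (e : E) : ∃ a b c : ℤ, ∀ x y : ℤ, eval e x y = a * x + b * y + c := by
  induction e with
  | X => exact ⟨1, 0, 0, fun x y => by simp [eval]⟩
  | Y => exact ⟨0, 1, 0, fun x y => by simp [eval]⟩
  | Zero => exact ⟨0, 0, 0, fun x y => by simp [eval]⟩
  | One => exact ⟨0, 0, 1, fun x y => by simp [eval]⟩
  | Plus l r ihl ihr =>
    obtain ⟨a1, b1, c1, h1⟩ := ihl
    obtain ⟨a2, b2, c2, h2⟩ := ihr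
    exact ⟨a1 + a2, b1 + b2, c1 + c2, fun x y => by simp [eval, h1, h2]; ring⟩

theorem stmt_2 :
    ¬ ∃ e : E, ∀ x y : ℤ,
      eval e x y ≥ x ∧ eval e x y ≥ y ∧
      (eval e x y = x ∨ eval e x y = y) := by
  rintro ⟨e, h⟩
  obtain ⟨a, b, c, hl⟩ := eval_linear e
  have h00 := h 0 0
  have h10 := h 1 0
  have h01 := h 0 1
  have h11 := h 1 1
  simp [hl] at h00 h10 h01 h11
  omega
end

section
/- Consider the inductive type E with constructors X, Y, Zero, One, Plus : E → E → E, with semantics eval as above. There is no e : E satisfying ψ_max2(eval e, x, y) simultaneously on the four input examples (x, y) = (0,0), (0,1), (1,0), (1,1). -/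
def psiMax2 (f : ℤ → ℤ → ℤ) (x y : ℤ) : Prop :=
  f x y ≥ x ∧ f x y ≥ y ∧ (f x y = x ∨ f x y = y)

lemma eval_add (e : E) : eval e 0 1 + eval e 1 0 = eval e 1 1 + eval e 0 0 := by
  induction e with
  | X => simp [eval]
  | Y => simp [eval]
  | Zero => simp [eval]
  | One => simp [eval]
  | Plus l r ihl ihr => simp only [eval]; omega

theorem stmt_3 :
    ¬ ∃ e : E,
      psiMax2 (eval e) 0 0 ∧ psiMax2 (eval e) 0 1 ∧
      psiMax2 (eval e) 1 0 ∧ psiMax2 (eval e) 1 1 := by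
  rintro ⟨e, ⟨_, _, h00⟩, ⟨h01a, h01b, h01⟩, ⟨h10a, h10b, h10⟩, ⟨_, _, h11⟩⟩
  have := eval_add e
  omega
end
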